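/- arXiv:1405.5892 — 3 statements merged into one kernel-verified Lean document; each statement's English description precedes it below -/
import Mathlib

section
/- For p ∈ [0,1], a > 0, σ₁² > 0, σ₂² > 0, the function ℓ(p) = 2 f(p)(σ₁² p + σ₂² (1-p)) / (a f(p) + σ₁² p + σ₂² (1-p)), where f(p) = p(1-p), is concave on [0,1]. -/
/-!
Write `H x y = x * y / (x + y)` (half the harmonic mean). On `x ≥ 0, y > 0` it is jointly
concave and nondecreasing in each argument, so `H ∘ (g, h)` is concave whenever `g` and `h` are
concave. The cost is `(2 / a) • H (a f, S)` with `f p = p (1 - p)` concave and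
`S p = σ₁ p + σ₂ (1 - p)` affine and positive on `[0, 1]`.
-/

open Set

lemma mul_div_add_le_mul_div_add {x x' y y' : ℝ} (hx : 0 ≤ x) (hxx' : x ≤ x') (hy : 0 < y)
    (hyy' : y ≤ y') : x * y / (x + y) ≤ x' * y' / (x' + y') := by
  rw [div_le_div_iff₀ (by linarith) (by linarith)]
  nlinarith [mul_nonneg (mul_nonneg hy.le (sub_nonneg.2 hxx')) hy.le,
    mul_nonneg (mul_nonneg hx (sub_nonneg.2 hyy')) (hx.trans hxx')]

lemma convexCombo_mul_div_add_le {x₁ y₁ x₂ y₂ t u : ℝ} (hx₁ : 0 ≤ x₁) (hy₁ : 0 < y₁)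
    (hx₂ : 0 ≤ x₂) (hy₂ : 0 < y₂) (ht : 0 ≤ t) (hu : 0 ≤ u) (htu : t + u = 1) :
    t * (x₁ * y₁ / (x₁ + y₁)) + u * (x₂ * y₂ / (x₂ + y₂)) ≤
      (t * x₁ + u * x₂) * (t * y₁ + u * y₂) / ((t * x₁ + u * x₂) + (t * y₁ + u * y₂)) := by
  have hy : 0 < t * y₁ + u * y₂ := convex_Ioi (0 : ℝ) hy₁ hy₂ ht hu htu
  rw [← mul_div_assoc, ← mul_div_assoc, div_add_div _ _ (by positivity) (by positivity),
    div_le_div_iff₀ (by positivity) (by positivity)]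
  nlinarith [mul_nonneg (mul_nonneg ht hu) (sq_nonneg (x₁ * y₂ - x₂ * y₁))]

theorem ConcaveOn.mul_div_add {E : Type*} [AddCommGroup E] [Module ℝ E] {s : Set E}
    {g h : E → ℝ} (hg : ConcaveOn ℝ s g) (hh : ConcaveOn ℝ s h) (hg₀ : ∀ x ∈ s, 0 ≤ g x)
    (hh₀ : ∀ x ∈ s, 0 < h x) : ConcaveOn ℝ s (fun x => g x * h x / (g x + h x)) := by
  refine ⟨hg.1, fun x hx y hy t u ht hu htu => ?_⟩
  calc t • (g x * h x / (g x + h x)) + u • (g y * h y / (g y + h y))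
      ≤ (t * g x + u * g y) * (t * h x + u * h y) /
          ((t * g x + u * g y) + (t * h x + u * h y)) :=
        convexCombo_mul_div_add_le (hg₀ x hx) (hh₀ x hx) (hg₀ y hy) (hh₀ y hy) ht hu htu
    _ ≤ g (t • x + u • y) * h (t • x + u • y) / (g (t • x + u • y) + h (t • x + u • y)) :=
        mul_div_add_le_mul_div_add (by have := hg₀ x hx; have := hg₀ y hy; positivity)
          (hg.2 hx hy ht hu htu) (convex_Ioi (0 : ℝ) (hh₀ x hx) (hh₀ y hy) ht hu htu)
          (hh.2 hx hy ht hu htu)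

lemma concaveOn_mul_one_sub : ConcaveOn ℝ univ fun p : ℝ => p * (1 - p) := by
  refine ⟨convex_univ, fun x _ y _ t u ht hu htu => ?_⟩
  simp only [smul_eq_mul]
  obtain rfl : u = 1 - t := by linarith
  nlinarith [mul_nonneg (mul_nonneg ht hu) (sq_nonneg (x - y))]

lemma concaveOn_mul_add_mul_one_sub (c d : ℝ) :
    ConcaveOn ℝ univ fun p : ℝ => c * p + d * (1 - p) := by
  refine ⟨convex_univ, fun x _ y _ t u _ _ htu => le_of_eq ?_⟩
  simp only [smul_eq_mul]
  linear_combination d * htu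

lemma mul_add_mul_one_sub_pos {c d p : ℝ} (hc : 0 < c) (hd : 0 < d) (hp : p ∈ Icc (0 : ℝ) 1) :
    0 < c * p + d * (1 - p) := by
  have := convex_Ioi (0 : ℝ) hc hd hp.1 (sub_nonneg.2 hp.2) (add_sub_cancel p 1)
  simpa only [smul_eq_mul, mul_comm, mem_Ioi] using this

/-- Case IV current cost: for `a > 0`, `σ₁² > 0`, `σ₂² > 0`, the function
`ℓ(p) = 2 f(p)(σ₁² p + σ₂²(1-p)) / (a f(p) + σ₁² p + σ₂²(1-p))` with `f(p) = p(1-p)`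
is concave on `[0,1]`. -/
theorem stmt_3 (a σ1 σ2 : ℝ) (ha : 0 < a) (hσ1 : 0 < σ1) (hσ2 : 0 < σ2) :
    ConcaveOn ℝ (Set.Icc (0 : ℝ) 1)
      (fun p => 2 * (p * (1 - p)) * (σ1 * p + σ2 * (1 - p)) /
        (a * (p * (1 - p)) + (σ1 * p + σ2 * (1 - p)))) := by
  have hf : ConcaveOn ℝ (Icc 0 1) fun p : ℝ => a * (p * (1 - p)) :=
    (concaveOn_mul_one_sub.subset (subset_univ _) (convex_Icc 0 1)).smul ha.le
  have hS : ConcaveOn ℝ (Icc 0 1) fun p : ℝ => σ1 * p + σ2 * (1 - p) :=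
    (concaveOn_mul_add_mul_one_sub σ1 σ2).subset (subset_univ _) (convex_Icc 0 1)
  have hH := hf.mul_div_add hS
    (fun p hp => mul_nonneg ha.le (mul_nonneg hp.1 (sub_nonneg.2 hp.2)))
    (fun p hp => mul_add_mul_one_sub_pos hσ1 hσ2 hp)
  refine (hH.smul (by positivity : (0 : ℝ) ≤ 2 / a)).congr fun p _ => ?_
  simp only [smul_eq_mul]
  field_simp
end

section
/- Fix a > 0, λ ∈ [0,1), f(p) = p(1-p), and define ℓ(p; σ₁², σ₂²) = (1-λ)·2 f(p)(σ₁² p + σ₂² (1-p))/(a f(p) + σ₁² p + σ₂² (1-p)). Suppose σ₁ₐ² > σ₁ᵦ² and σ₂ₐ² < σ₂ᵦ². Let p* = (σ₂ᵦ² - σ₂ₐ²)/(σ₁ₐ² - σ₁ᵦ² + σ₂ᵦ² - σ₂ₐ²). Then p* ∈ (0,1), and for all p ∈ [0, p*], ℓ(p; σ₁ₐ², σ₂ₐ²) ≤ ℓ(p; σ₁ᵦ², σ₂ᵦ²), while for all p ∈ [p*, 1], ℓ(p; σ₁ₐ², σ₂ₐ²) ≥ ℓ(p; σ₁ᵦ²,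 σ₂ᵦ²). -/
lemma stmt_8_key (a lam f Sa Sb : ℝ) (ha : 0 < a) (hl : lam < 1)
    (hf : 0 ≤ f) (hSa : 0 < Sa) (hSb : 0 < Sb) (hS : Sa ≤ Sb) :
    (1 - lam) * (2 * f * Sa / (a * f + Sa)) ≤ (1 - lam) * (2 * f * Sb / (a * f + Sb)) := by
  apply mul_le_mul_of_nonneg_left _ (by linarith)
  rw [div_le_div_iff₀ (by positivity) (by positivity)]
  nlinarith [mul_nonneg (mul_nonneg hf ha.le) (sub_nonneg.2 hS)]

/-- Case IV single-crossing (threshold) structure: with equal mean separation `a > 0`,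
crossed variance orderings `σ₁ₐ² > σ₁ᵦ²`, `σ₂ₐ² < σ₂ᵦ²`, the threshold
`p* = (σ₂ᵦ² - σ₂ₐ²)/(σ₁ₐ² - σ₁ᵦ² + σ₂ᵦ² - σ₂ₐ²)` lies in `(0,1)`, and cost `a`
is below cost `b` on `[0,p*]` and above it on `[p*,1]`. -/
theorem stmt_8 (a lam σ1a σ2a σ1b σ2b : ℝ) (ha : 0 < a)
    (hlam0 : 0 ≤ lam) (hlam1 : lam < 1)
    (h1a : 0 < σ1a) (h2a : 0 < σ2a) (h1b : 0 < σ1b) (h2b : 0 < σ2b)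
    (h1 : σ1a > σ1b) (h2 : σ2a < σ2b) :
    let ℓ : ℝ → ℝ → ℝ → ℝ := fun σ1 σ2 p =>
      (1 - lam) * (2 * (p * (1 - p)) * (σ1 * p + σ2 * (1 - p)) /
        (a * (p * (1 - p)) + (σ1 * p + σ2 * (1 - p))))
    let pstar : ℝ := (σ2b - σ2a) / (σ1a - σ1b + σ2b - σ2a)
    0 < pstar ∧ pstar < 1
      ∧ (∀ p ∈ Set.Icc (0 : ℝ) pstar, ℓ σ1a σ2a p ≤ ℓ σ1b σ2b p)
      ∧ (∀ p ∈ Set.Icc pstar (1 : ℝ), ℓ σ1a σ2a p ≥ ℓ σ1b σ2b p) := by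
  intro ℓ pstar
  have hD : 0 < σ1a - σ1b + σ2b - σ2a := by linarith
  have hps : 0 < pstar := div_pos (by linarith) hD
  have hps1 : pstar < 1 := (div_lt_one hD).2 (by linarith)
  refine ⟨hps, hps1, ?_, ?_⟩
  · rintro p ⟨hp0, hpu⟩
    have hp1 : p ≤ 1 := le_of_lt (lt_of_le_of_lt hpu hps1)
    have hmul : p * (σ1a - σ1b + σ2b - σ2a) ≤ σ2b - σ2a := by
      calc p * (σ1a - σ1b + σ2b - σ2a) ≤ pstar * (σ1a - σ1b + σ2b - σ2a) :=
            mul_le_mul_of_nonneg_right hpu hD.le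
        _ = σ2b - σ2a := div_mul_cancel₀ _ hD.ne'
    exact stmt_8_key a lam (p * (1 - p)) _ _ ha hlam1
      (mul_nonneg hp0 (by linarith)) (by nlinarith) (by nlinarith) (by nlinarith)
  · rintro p ⟨hpl, hp1⟩
    have hp0 : 0 ≤ p := le_of_lt (lt_of_lt_of_le hps hpl)
    have hmul : σ2b - σ2a ≤ p * (σ1a - σ1b + σ2b - σ2a) := by
      calc σ2b - σ2a = pstar * (σ1a - σ1b + σ2b - σ2a) := (div_mul_cancel₀ _ hD.ne').symm
        _ ≤ p * (σ1a - σ1b + σ2b - σ2a) := mul_le_mul_of_nonneg_right hpl hD.le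
    exact stmt_8_key a lam (p * (1 - p)) _ _ ha hlam1
      (mul_nonneg hp0 (by linarith)) (by nlinarith) (by nlinarith) (by nlinarith)
end

section
/- Let J : Δ → R be concave on the probability simplex Δ ⊆ R^n, let r : Y → R^n be a measurable map with nonnegative components (the likelihood vector), let P be a column-stochastic n×n matrix, and suppose ∫_Y (1^T diag(r(y)) p) dμ(y) = 1 for all p ∈ Δ. Then the map p ↦ ∫_Y (1^T diag(r(y)) p) · J( P diag(r(y)) p / (1^T diag(r(y)) p) ) dμ(y) is concave on Δ, where the integrand is interpreted as 0 when 1^T diag(r(y)) p = 0. -/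
open MeasureTheory

/-- The probability simplex in `ℝⁿ`. -/
def simplex (n : ℕ) : Set (Fin n → ℝ) :=
  {p | (∀ i, 0 ≤ p i) ∧ ∑ i, p i = 1}

/-!
The integrand is the perspective `(x, t) ↦ t J(x / t)` of `J`, evaluated at the image
`(P diag(r(y)) p, 1ᵀ diag(r(y)) p)` of `p` under a linear map. The perspective of a concave
function is concave on the cone over its domain: for `t₁, t₂ > 0` the point
`(t₁ x₁ + t₂ x₂) / (t₁ + t₂)` is a convex combination of `x₁` and `x₂`. Column-stochasticity of `P`
places that image in the cone over the simplex, and integrating in `y` preserves concavity.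
-/

open Matrix

section Perspective

variable {E : Type*} [AddCommGroup E] [Module ℝ E] {C : Set E} {J : E → ℝ}

noncomputable def perspective (J : E → ℝ) (z : E × ℝ) : ℝ :=
  if z.2 = 0 then 0 else z.2 * J (z.2⁻¹ • z.1)

def perspectiveCone (C : Set E) : Set (E × ℝ) :=
  {z | ∃ t, 0 ≤ t ∧ ∃ x ∈ C, z = (t • x, t)}

lemma perspective_smul_mk (J : E → ℝ) (t : ℝ) (x : E) : perspective J (t • x, t) = t * J x := by
  by_cases ht : t = 0
  · simp [perspective, ht]
  · simp [perspective, ht, inv_smul_smul₀]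

lemma ConcaveOn.exists_smul_add_smul_eq (hJ : ConcaveOn ℝ C J) {x₁ x₂ : E} (hx₁ : x₁ ∈ C)
    (hx₂ : x₂ ∈ C) {t₁ t₂ : ℝ} (ht₁ : 0 ≤ t₁) (ht₂ : 0 ≤ t₂) :
    ∃ x ∈ C, t₁ • x₁ + t₂ • x₂ = (t₁ + t₂) • x ∧ t₁ * J x₁ + t₂ * J x₂ ≤ (t₁ + t₂) * J x := by
  rcases (add_nonneg ht₁ ht₂).eq_or_lt with hs | hs
  · obtain ⟨rfl, rfl⟩ : t₁ = 0 ∧ t₂ = 0 := ⟨by linarith, by linarith⟩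
    exact ⟨x₁, hx₁, by simp, by simp⟩
  have hw : t₁ / (t₁ + t₂) + t₂ / (t₁ + t₂) = 1 := by field_simp
  refine ⟨(t₁ / (t₁ + t₂)) • x₁ + (t₂ / (t₁ + t₂)) • x₂,
    hJ.1 hx₁ hx₂ (by positivity) (by positivity) hw, ?_, ?_⟩
  · rw [smul_add, smul_smul, smul_smul, mul_div_cancel₀ _ hs.ne', mul_div_cancel₀ _ hs.ne']
  · calc t₁ * J x₁ + t₂ * J x₂
          = (t₁ + t₂) * ((t₁ / (t₁ + t₂)) • J x₁ + (t₂ / (t₁ + t₂)) • J x₂) := by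
            simp only [smul_eq_mul]; field_simp
      _ ≤ _ := mul_le_mul_of_nonneg_left (hJ.2 hx₁ hx₂ (by positivity) (by positivity) hw) hs.le

theorem concaveOn_perspective (hJ : ConcaveOn ℝ C J) :
    ConcaveOn ℝ (perspectiveCone C) (perspective J) := by
  have key : ∀ z₁ ∈ perspectiveCone C, ∀ z₂ ∈ perspectiveCone C, ∀ ⦃a b : ℝ⦄, 0 ≤ a → 0 ≤ b →
      a • z₁ + b • z₂ ∈ perspectiveCone C ∧
        a * perspective J z₁ + b * perspective J z₂ ≤ perspective J (a • z₁ + b • z₂) := by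
    rintro _ ⟨t₁, ht₁, x₁, hx₁, rfl⟩ _ ⟨t₂, ht₂, x₂, hx₂, rfl⟩ a b ha hb
    obtain ⟨x, hx, hsum, hle⟩ :=
      hJ.exists_smul_add_smul_eq hx₁ hx₂ (mul_nonneg ha ht₁) (mul_nonneg hb ht₂)
    have hz : a • (t₁ • x₁, t₁) + b • (t₂ • x₂, t₂) =
        ((a * t₁ + b * t₂) • x, a * t₁ + b * t₂) := by
      simp [← hsum, smul_smul]
    rw [hz, perspective_smul_mk, perspective_smul_mk, perspective_smul_mk]
    exact ⟨⟨_, by positivity, x, hx, rfl⟩, by linarith⟩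
  exact ⟨fun z₁ h₁ z₂ h₂ a b ha hb _ ↦ (key z₁ h₁ z₂ h₂ ha hb).1,
    fun z₁ h₁ z₂ h₂ a b ha hb _ ↦ (key z₁ h₁ z₂ h₂ ha hb).2⟩

end Perspective

theorem concaveOn_integral {E Y : Type*} [AddCommGroup E] [Module ℝ E] [MeasurableSpace Y]
    {μ : Measure Y} {s : Set E} {F : E → Y → ℝ} (hs : Convex ℝ s)
    (hF : ∀ᵐ y ∂μ, ConcaveOn ℝ s (F · y)) (hint : ∀ p ∈ s, Integrable (F p) μ) :
    ConcaveOn ℝ s (fun p ↦ ∫ y, F p y ∂μ) := by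
  refine ⟨hs, fun p hp q hq a b ha hb hab ↦ ?_⟩
  calc a • ∫ y, F p y ∂μ + b • ∫ y, F q y ∂μ = ∫ y, a • F p y + b • F q y ∂μ := by
        rw [← integral_smul, ← integral_smul]
        exact (integral_add ((hint p hp).smul a) ((hint q hq).smul b)).symm
    _ ≤ ∫ y, F (a • p + b • q) y ∂μ :=
        integral_mono_ae (((hint p hp).smul a).add ((hint q hq).smul b))
          (hint _ (hs hp hq ha hb hab)) (hF.mono fun y hy ↦ hy.2 hp hq ha hb hab)

section Bayes

variable {ι : Type*} [Fintype ι] [DecidableEq ι]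

lemma mk_dotProduct_mem_perspectiveCone [Nonempty ι] {v : ι → ℝ} (hv : 0 ≤ v) :
    (v, 1 ⬝ᵥ v) ∈ perspectiveCone (stdSimplex ℝ ι) := by
  rw [one_dotProduct]
  rcases (Finset.sum_nonneg fun i _ ↦ hv i).eq_or_lt with hs | hs
  · have hv0 : v = 0 := funext fun i ↦
      (Finset.sum_eq_zero_iff_of_nonneg fun i _ ↦ hv i).1 hs.symm i (Finset.mem_univ i)
    exact ⟨0, le_rfl, Pi.single (Classical.arbitrary ι) 1, single_mem_stdSimplex ℝ _,
      by simp [hv0]⟩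
  · refine ⟨_, hs.le, (∑ i, v i)⁻¹ • v, ⟨fun i ↦ ?_, ?_⟩, by simp [smul_smul, hs.ne']⟩
    · exact smul_nonneg (inv_nonneg.2 hs.le) (hv i)
    · simp [← Finset.mul_sum, hs.ne']

/-- Numerator and denominator of the Bayes operator `Φ = P diag(ρ) p / 1ᵀ diag(ρ) p`. -/
def bayesNumDen (P : Matrix ι ι ℝ) (ρ : ι → ℝ) : (ι → ℝ) →ₗ[ℝ] (ι → ℝ) × ℝ :=
  (P.mulVecLin.prod (dotProductBilin ℝ ℝ 1)) ∘ₗ (diagonal ρ).mulVecLin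

lemma bayesNumDen_apply (P : Matrix ι ι ℝ) (ρ p : ι → ℝ) :
    bayesNumDen P ρ p = (fun i ↦ ∑ j, P i j * (ρ j * p j), ∑ j, ρ j * p j) := by
  ext i <;> simp [bayesNumDen, mulVec, dotProduct, diagonal_apply, mul_assoc]

lemma bayesNumDen_mem_perspectiveCone {P : Matrix ι ι ℝ} (hP : P ∈ colStochastic ℝ ι)
    {ρ p : ι → ℝ} (hρ : 0 ≤ ρ) (hp : p ∈ stdSimplex ℝ ι) :
    bayesNumDen P ρ p ∈ perspectiveCone (stdSimplex ℝ ι) := by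
  obtain ⟨i, -, -⟩ := Finset.exists_ne_zero_of_sum_ne_zero (hp.2.symm ▸ one_ne_zero)
  have : Nonempty ι := ⟨i⟩
  have hv : 0 ≤ diagonal ρ *ᵥ p := fun j ↦ by
    rw [mulVec_diagonal]; exact mul_nonneg (hρ j) (hp.1 j)
  have hden : 1 ⬝ᵥ (P *ᵥ (diagonal ρ *ᵥ p)) = 1 ⬝ᵥ (diagonal ρ *ᵥ p) := by
    rw [dotProduct_mulVec, hP.2]
  have h := mk_dotProduct_mem_perspectiveCone (nonneg_mulVec_of_mem_colStochastic hP hv)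
  rw [hden] at h
  exact h

end Bayes

theorem stmt_10_general {n : ℕ} {Y : Type*} [MeasurableSpace Y] (μ : Measure Y)
    (r : Y → Fin n → ℝ) (hrpos : ∀ y i, 0 ≤ r y i)
    (P : Matrix (Fin n) (Fin n) ℝ) (hP0 : ∀ i j, 0 ≤ P i j)
    (hPcol : ∀ j, ∑ i, P i j = 1)
    (J : (Fin n → ℝ) → ℝ) (hJ : ConcaveOn ℝ (simplex n) J)
    (hint : ∀ p ∈ simplex n,
      Integrable (fun y =>
        if h : (∑ j, r y j * p j) = 0 then 0
        else (∑ j, r y j * p j) *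
          J (fun i => (∑ j, P i j * (r y j * p j)) / (∑ j, r y j * p j))) μ) :
    ConcaveOn ℝ (simplex n) (fun p =>
      ∫ y,
        (if h : (∑ j, r y j * p j) = 0 then 0
         else (∑ j, r y j * p j) *
           J (fun i => (∑ j, P i j * (r y j * p j)) / (∑ j, r y j * p j))) ∂μ) := by
  have hP : P ∈ colStochastic ℝ (Fin n) := mem_colStochastic_iff_sum.2 ⟨hP0, hPcol⟩
  refine concaveOn_integral (convex_stdSimplex ℝ (Fin n)) (ae_of_all _ fun y ↦ ?_) hint
  have hcomp := ((concaveOn_perspective hJ).comp_linearMap (bayesNumDen P (r y))).subset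
    (fun p hp ↦ bayesNumDen_mem_perspectiveCone hP (hrpos y) hp) (convex_stdSimplex ℝ _)
  refine hcomp.congr fun p _ ↦ ?_
  simp only [Function.comp_apply, bayesNumDen_apply, perspective, dite_eq_ite]
  congr 3
  ext i
  simp [div_eq_inv_mul]

/-- Bayes-operator concavity preservation: if `J` is concave on the simplex, `r` is a
nonnegative measurable likelihood vector, `P` is column-stochastic, and the predictive
likelihood normalizes, then `p ↦ ∫ (1ᵀ diag(r(y)) p) · J(P diag(r(y)) p / (1ᵀ diag(r(y)) p)) dμ`
is concave on the simplex (the integrand being `0` when the normalizer vanishes). -/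
theorem stmt_10 {n : ℕ} {Y : Type*} [MeasurableSpace Y] (μ : Measure Y) [SigmaFinite μ]
    (r : Y → Fin n → ℝ) (hr : Measurable r) (hrpos : ∀ y i, 0 ≤ r y i)
    (P : Matrix (Fin n) (Fin n) ℝ) (hP0 : ∀ i j, 0 ≤ P i j)
    (hPcol : ∀ j, ∑ i, P i j = 1)
    (J : (Fin n → ℝ) → ℝ) (hJ : ConcaveOn ℝ (simplex n) J)
    (hnorm : ∀ p ∈ simplex n, ∫ y, (∑ j, r y j * p j) ∂μ = 1)
    (hint : ∀ p ∈ simplex n,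
      Integrable (fun y =>
        if h : (∑ j, r y j * p j) = 0 then 0
        else (∑ j, r y j * p j) *
          J (fun i => (∑ j, P i j * (r y j * p j)) / (∑ j, r y j * p j))) μ) :
    ConcaveOn ℝ (simplex n) (fun p =>
      ∫ y,
        (if h : (∑ j, r y j * p j) = 0 then 0
         else (∑ j, r y j * p j) *
           J (fun i => (∑ j, P i j * (r y j * p j)) / (∑ j, r y j * p j))) ∂μ) :=
  stmt_10_general μ r hrpos P hP0 hPcol J hJ hint
end
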